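/- arXiv:2310.10107 — 2 statements merged into one kernel-verified Lean document; each statement's English description precedes it below -/
import Mathlib

section
/- Let d, K ≥ 1 be natural numbers, let G_w, G_x > 0 and β ≥ 0 be reals, and let x_k, w_k ∈ ℝ^d for k ∈ {1,…,K} satisfy ‖w_k‖₂ ≤ G_w and ‖x_k‖₂ ≤ G_x for all k. Suppose that ∑_{j=1}^{k} (x_jᵀ w_k)² ≤ β for all k ∈ {1,…,K}. Then for every λ > 0, ∑_{k=1}^{K} |x_kᵀ w_k| ≤ √((λ + β) · d · K · log(1 + G_w² G_x² K / (d λ))). -/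
/-!
Put `V_0 = (λ / G_w²) I` and `V_k = V_0 + ∑_{j ≤ k} x_j x_jᵀ`. Cauchy–Schwarz in the geometry of `V_k`
gives `(x_kᵀ w_k)² ≤ ‖x_k‖²_{V_k⁻¹} ‖w_k‖²_{V_k}`, and the hypotheses bound
`‖w_k‖²_{V_k} = (λ / G_w²) ‖w_k‖² + ∑_{j ≤ k} (x_jᵀ w_k)²` by `λ + β`.
By the matrix determinant lemma `det V_{k-1} = det V_k (1 - ‖x_k‖²_{V_k⁻¹})`, so `log (1 - t) ≤ -t`
telescopes to `∑_k ‖x_k‖²_{V_k⁻¹} ≤ log det V_K - log det V_0`, which AM–GM on the eigenvalues of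
`V_K` bounds by `d log (1 + G_w² G_x² K / (d λ))`. A final Cauchy–Schwarz over `k` concludes.
-/

open Matrix Finset

namespace Matrix

variable {n : Type*} [Fintype n]

theorem IsHermitian.dotProduct_mulVec_comm {M : Matrix n n ℝ} (hM : M.IsHermitian)
    (u v : n → ℝ) : u ⬝ᵥ M *ᵥ v = M *ᵥ u ⬝ᵥ v := by
  rw [dotProduct_mulVec, ← mulVec_transpose, isHermitian_iff_isSymm.mp hM]

theorem PosSemidef.sq_dotProduct_mulVec_le {M : Matrix n n ℝ} (hM : M.PosSemidef)
    (u v : n → ℝ) : (u ⬝ᵥ M *ᵥ v) ^ 2 ≤ (u ⬝ᵥ M *ᵥ u) * (v ⬝ᵥ M *ᵥ v) := by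
  let := M.toSeminormedAddCommGroup hM
  let := M.toInnerProductSpace hM
  have := real_inner_mul_inner_self_le v u
  change (M *ᵥ u) ⬝ᵥ v * ((M *ᵥ u) ⬝ᵥ v) ≤ (M *ᵥ v) ⬝ᵥ v * ((M *ᵥ u) ⬝ᵥ u) at this
  simp only [← hM.1.dotProduct_mulVec_comm] at this
  linarith

variable [DecidableEq n]

theorem PosDef.log_det_le [Nonempty n] {A : Matrix n n ℝ} (hA : A.PosDef) :
    Real.log A.det ≤ Fintype.card n * Real.log (A.trace / Fintype.card n) := by
  have hn : (0 : ℝ) < Fintype.card n := by exact_mod_cast Fintype.card_pos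
  have jensen := strictConcaveOn_log_Ioi.concaveOn.le_map_sum (t := univ)
    (w := fun _ => (Fintype.card n : ℝ)⁻¹) (p := hA.1.eigenvalues) (by simp)
    (by simp [hn.ne']) (fun i _ => hA.eigenvalues_pos i)
  simp only [smul_eq_mul, ← Finset.mul_sum] at jensen
  rw [hA.1.det_eq_prod_eigenvalues, hA.1.trace_eq_sum_eigenvalues]
  simp only [RCLike.ofReal_real_eq_id, id]
  rw [Real.log_prod fun i _ => (hA.eigenvalues_pos i).ne', div_eq_inv_mul]
  rwa [← inv_mul_le_iff₀ hn]

theorem det_add_vecMulVec {α : Type*} [CommRing α] {A : Matrix n n α}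
    (hA : IsUnit A.det) (u v : n → α) :
    (A + vecMulVec u v).det = A.det * (1 + v ⬝ᵥ A⁻¹ *ᵥ u) := by
  rw [vecMulVec_eq Unit, det_add_replicateCol_mul_replicateRow hA]
  congr 1
  rw [det_unique, add_apply, one_apply_eq, ← replicateRow_vecMul,
    replicateRow_mul_replicateCol_apply, dotProduct_mulVec]

theorem PosDef.sq_dotProduct_le {V : Matrix n n ℝ} (hV : V.PosDef) (x w : n → ℝ) :
    (x ⬝ᵥ w) ^ 2 ≤ (x ⬝ᵥ V⁻¹ *ᵥ x) * (w ⬝ᵥ V *ᵥ w) := by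
  have hx : V *ᵥ (V⁻¹ *ᵥ x) = x := by
    rw [mulVec_mulVec, mul_nonsing_inv _ hV.det_pos.ne'.isUnit, one_mulVec]
  have := hV.posSemidef.sq_dotProduct_mulVec_le (V⁻¹ *ᵥ x) w
  rwa [hV.1.dotProduct_mulVec_comm, hV.1.dotProduct_mulVec_comm (V⁻¹ *ᵥ x), hx] at this

theorem PosDef.dotProduct_inv_mulVec_le_log_det_sub {V : Matrix n n ℝ} (hV : V.PosDef)
    (v : n → ℝ) :
    v ⬝ᵥ (V + vecMulVec v v)⁻¹ *ᵥ v ≤ Real.log (V + vecMulVec v v).det - Real.log V.det := by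
  set V' := V + vecMulVec v v
  have hV' : V'.PosDef := hV.add_posSemidef (by simpa using posSemidef_vecMulVec_self_star v)
  have hdet : V.det = V'.det * (1 - v ⬝ᵥ V'⁻¹ *ᵥ v) := by
    have := det_add_vecMulVec hV'.det_pos.ne'.isUnit (-v) v
    simpa [V', sub_eq_add_neg, mulVec_neg] using this
  have hratio : V.det / V'.det = 1 - v ⬝ᵥ V'⁻¹ *ᵥ v := by
    rw [hdet, mul_div_cancel_left₀ _ hV'.det_pos.ne']
  have hlog := Real.log_le_sub_one_of_pos (div_pos hV.det_pos hV'.det_pos)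
  rw [Real.log_div hV.det_pos.ne' hV'.det_pos.ne', hratio] at hlog
  linarith

end Matrix

section DesignMatrix

variable {ι n : Type*}

def designMatrix (V₀ : Matrix n n ℝ) (x : ι → n → ℝ) (s : Finset ι) : Matrix n n ℝ :=
  V₀ + ∑ j ∈ s, vecMulVec (x j) (x j)

variable {V₀ : Matrix n n ℝ} {x : ι → n → ℝ}

theorem designMatrix_empty : designMatrix V₀ x ∅ = V₀ := by
  rw [designMatrix, sum_empty, add_zero]

theorem designMatrix_insert [DecidableEq ι] {a : ι} {s : Finset ι} (ha : a ∉ s) :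
    designMatrix V₀ x (insert a s) = designMatrix V₀ x s + vecMulVec (x a) (x a) := by
  rw [designMatrix, designMatrix, sum_insert ha, add_comm (vecMulVec _ _), add_assoc]

variable [Fintype n]

theorem Matrix.PosDef.designMatrix (hV₀ : V₀.PosDef) (s : Finset ι) :
    (designMatrix V₀ x s).PosDef :=
  hV₀.add_posSemidef <| posSemidef_sum _ fun j _ => by
    simpa using posSemidef_vecMulVec_self_star (x j)

theorem dotProduct_designMatrix_mulVec (s : Finset ι) (w : n → ℝ) :
    w ⬝ᵥ designMatrix V₀ x s *ᵥ w = w ⬝ᵥ V₀ *ᵥ w + ∑ j ∈ s, (x j ⬝ᵥ w) ^ 2 := by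
  rw [designMatrix, add_mulVec, dotProduct_add, sum_mulVec, dotProduct_sum]
  congr 1
  refine sum_congr rfl fun j _ => ?_
  rw [vecMulVec_mulVec, op_smul_eq_smul, dotProduct_smul, smul_eq_mul, dotProduct_comm w, sq]

theorem trace_designMatrix (s : Finset ι) :
    (designMatrix V₀ x s).trace = V₀.trace + ∑ j ∈ s, x j ⬝ᵥ x j := by
  simp [designMatrix, trace_sum]

theorem sum_dotProduct_inv_designMatrix_le [LinearOrder ι] [DecidableEq n] (hV₀ : V₀.PosDef)
    (s : Finset ι) :
    ∑ k ∈ s, x k ⬝ᵥ (designMatrix V₀ x {j ∈ s | j ≤ k})⁻¹ *ᵥ x k ≤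
      Real.log (designMatrix V₀ x s).det - Real.log V₀.det := by
  induction s using Finset.induction_on_max with
  | empty => simp [designMatrix_empty]
  | insert a s hlt ih =>
    have ha : a ∉ s := fun h => lt_irrefl a (hlt a h)
    have hfilter_a : {j ∈ insert a s | j ≤ a} = insert a s :=
      filter_true_of_mem fun j hj => (mem_insert.mp hj).elim le_of_eq fun h => (hlt j h).le
    have hfilter (k : ι) (hk : k ∈ s) : {j ∈ insert a s | j ≤ k} = {j ∈ s | j ≤ k} := by
      rw [filter_insert, if_neg (not_le.mpr (hlt k hk))]
    have step := (hV₀.designMatrix (x := x) s).dotProduct_inv_mulVec_le_log_det_sub (x a)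
    rw [← designMatrix_insert ha] at step
    rw [sum_insert ha, hfilter_a, sum_congr rfl fun k hk => by rw [hfilter k hk]]
    linarith

theorem log_det_designMatrix_smul_one_sub_le [DecidableEq n] [Nonempty n] {s : Finset ι}
    {c G : ℝ} (hc : 0 < c) (hx : ∀ j ∈ s, x j ⬝ᵥ x j ≤ G) :
    Real.log (designMatrix (c • 1) x s).det - Real.log (c • (1 : Matrix n n ℝ)).det ≤
      Fintype.card n * Real.log (1 + #s * G / (Fintype.card n * c)) := by
  set d : ℝ := (Fintype.card n : ℝ)
  have hd : 0 < d := Nat.cast_pos.mpr Fintype.card_pos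
  have hV := (PosDef.one.smul hc).designMatrix (x := x) s
  have htr : (designMatrix (c • 1) x s).trace ≤ c * d + #s * G := by
    rw [trace_designMatrix, trace_smul, trace_one, smul_eq_mul]
    grw [sum_le_sum hx]
    simp [d]
  calc _ ≤ d * Real.log ((designMatrix (c • 1) x s).trace / d) - d * Real.log c := by
        rw [det_smul, det_one, mul_one, Real.log_pow]
        exact sub_le_sub_right hV.log_det_le _
    _ = d * Real.log ((designMatrix (c • 1) x s).trace / (d * c)) := by
        rw [← mul_sub, ← Real.log_div (div_pos hV.trace_pos hd).ne' hc.ne', div_div]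
    _ ≤ d * Real.log (1 + #s * G / (d * c)) := by
        gcongr
        · exact div_pos hV.trace_pos (by positivity)
        · rw [one_add_div (by positivity)]
          gcongr
          linarith

theorem sum_sq_dotProduct_le_mul_log [LinearOrder ι] [DecidableEq n] [Nonempty n]
    {w : ι → n → ℝ} {s : Finset ι} {c G B : ℝ} (hc : 0 < c) (hB : 0 ≤ B)
    (hx : ∀ j ∈ s, x j ⬝ᵥ x j ≤ G)
    (hw : ∀ k ∈ s, w k ⬝ᵥ designMatrix (c • 1) x {j ∈ s | j ≤ k} *ᵥ w k ≤ B) :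
    ∑ k ∈ s, (x k ⬝ᵥ w k) ^ 2 ≤
      B * (Fintype.card n * Real.log (1 + #s * G / (Fintype.card n * c))) := by
  have hV₀ : (c • (1 : Matrix n n ℝ)).PosDef := PosDef.one.smul hc
  calc ∑ k ∈ s, (x k ⬝ᵥ w k) ^ 2
      ≤ ∑ k ∈ s, B * (x k ⬝ᵥ (designMatrix (c • 1) x {j ∈ s | j ≤ k})⁻¹ *ᵥ x k) := by
        refine sum_le_sum fun k hk => ?_
        have hV := hV₀.designMatrix (x := x) {j ∈ s | j ≤ k}
        grw [hV.sq_dotProduct_le, hw k hk, mul_comm]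
        exact hV.inv.posSemidef.dotProduct_mulVec_nonneg _
    _ ≤ B * (Fintype.card n * Real.log (1 + #s * G / (Fintype.card n * c))) := by
        rw [← mul_sum]
        grw [sum_dotProduct_inv_designMatrix_le hV₀, log_det_designMatrix_smul_one_sub_le hc hx]

end DesignMatrix

theorem dotProduct_self_le_sq_of_sqrt_le {n : Type*} [Fintype n] {v : n → ℝ} {G : ℝ}
    (h : √(∑ i, v i ^ 2) ≤ G) : v ⬝ᵥ v ≤ G ^ 2 := by
  simpa only [dotProduct, sq] using (Real.sqrt_le_iff.mp h).2

theorem index_change_lemma_general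
    (d K : ℕ) (hd : 1 ≤ d)
    (Gw Gx β : ℝ) (hGw : 0 < Gw) (hβ : 0 ≤ β)
    (x w : Fin K → Fin d → ℝ)
    (hw : ∀ k : Fin K, Real.sqrt (∑ i, (w k i) ^ 2) ≤ Gw)
    (hx : ∀ k : Fin K, Real.sqrt (∑ i, (x k i) ^ 2) ≤ Gx)
    (hsum : ∀ k : Fin K, ∑ j ∈ Finset.Iic k, (∑ i, x j i * w k i) ^ 2 ≤ β) :
    ∀ lam : ℝ, 0 < lam →
      ∑ k : Fin K, |∑ i, x k i * w k i| ≤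
        Real.sqrt ((lam + β) * d * K *
          Real.log (1 + Gw ^ 2 * Gx ^ 2 * K / (d * lam))) := by
  intro lam hlam
  have : Nonempty (Fin d) := ⟨⟨0, hd⟩⟩
  have hc : 0 < lam / Gw ^ 2 := by positivity
  have hwV (k : Fin K) (_ : k ∈ univ) :
      w k ⬝ᵥ designMatrix ((lam / Gw ^ 2) • 1) x {j | j ≤ k} *ᵥ w k ≤ lam + β := by
    rw [filter_ge_eq_Iic, dotProduct_designMatrix_mulVec, smul_mulVec, one_mulVec,
      dotProduct_smul, smul_eq_mul]
    grw [dotProduct_self_le_sq_of_sqrt_le (hw k), div_mul_cancel₀ _ (by positivity)]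
    exact add_le_add le_rfl (hsum k)
  have hpot := sum_sq_dotProduct_le_mul_log hc (by positivity)
    (fun j _ => dotProduct_self_le_sq_of_sqrt_le (hx j)) hwV
  have hT : (K : ℝ) * Gx ^ 2 / (d * (lam / Gw ^ 2)) = Gw ^ 2 * Gx ^ 2 * K / (d * lam) := by
    field_simp
  rw [card_univ, Fintype.card_fin, Fintype.card_fin, hT] at hpot
  refine (le_abs_self _).trans (Real.abs_le_sqrt ?_)
  calc (∑ k : Fin K, |∑ i, x k i * w k i|) ^ 2 ≤ K * ∑ k : Fin K, (∑ i, x k i * w k i) ^ 2 := by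
        simpa using sq_sum_le_card_mul_sum_sq (s := univ) (f := fun k => |∑ i, x k i * w k i|)
    _ ≤ K * ((lam + β) * (d * Real.log (1 + Gw ^ 2 * Gx ^ 2 * K / (d * lam)))) := by
        gcongr
        exact hpot
    _ = _ := by ring

/-- **Index Change Lemma** (Lemma 4).  If `‖w_k‖₂ ≤ G_w`, `‖x_k‖₂ ≤ G_x` and
`∑_{j=1}^k ⟨x_j, w_k⟩² ≤ β` for all `k ∈ [K]`, then for every `λ > 0`,
`∑_{k=1}^K |⟨x_k, w_k⟩| ≤ √((λ + β) d K log(1 + G_w² G_x² K / (d λ)))`. -/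
theorem index_change_lemma
    (d K : ℕ) (hd : 1 ≤ d) (hK : 1 ≤ K)
    (Gw Gx β : ℝ) (hGw : 0 < Gw) (hGx : 0 < Gx) (hβ : 0 ≤ β)
    (x w : Fin K → Fin d → ℝ)
    (hw : ∀ k : Fin K, Real.sqrt (∑ i, (w k i) ^ 2) ≤ Gw)
    (hx : ∀ k : Fin K, Real.sqrt (∑ i, (x k i) ^ 2) ≤ Gx)
    (hsum : ∀ k : Fin K, ∑ j ∈ Finset.Iic k, (∑ i, x j i * w k i) ^ 2 ≤ β) :
    ∀ lam : ℝ, 0 < lam →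
      ∑ k : Fin K, |∑ i, x k i * w k i| ≤
        Real.sqrt ((lam + β) * d * K *
          Real.log (1 + Gw ^ 2 * Gx ^ 2 * K / (d * lam))) :=
  index_change_lemma_general d K hd Gw Gx β hGw hβ x w hw hx hsum
end

section
/- Let X be a finite set with |X| = n ≥ 1 and let ε > 0 be such that 1/ε is a positive integer. Define the grid G := { v : X → ℝ : for every x ∈ X, v_x = m·(ε/n) for some nonnegative integer m, and v_x ≤ 1 }, and define the quantized simplex Δ̄^ε(X) := { v/‖v‖₁ : v ∈ G, v ≠ 0 }, where ‖v‖₁ = ∑_{x∈X} v_x. Then for every probability vector μ : X → ℝ (i.e., μ_x ≥ 0 and ∑_{x∈X} μ_x = 1) there exists μ̄ ∈ Δ̄^ε(X) such that (1/2)∑_{x∈X} |μ_x − μ̄_x| ≤ ε and μ̄_x ≥ μ_x/(1+ε) for every x ∈ X. -/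
/-- Approximation property of the quantized simplex (from the proof of
Proposition `barvartheta`): every probability vector `μ` on `X` has a point
`μ̄` of the quantized simplex `Δ̄^ε(X)` with total-variation distance at most
`ε` and with `μ̄_x ≥ μ_x/(1+ε)` coordinatewise. -/
theorem quantized_simplex_approx
    {X : Type*} [Fintype X] (n : ℕ) (hn : 1 ≤ n) (hcard : Fintype.card X = n)
    (ε : ℝ) (hε : 0 < ε) (hinv : ∃ m : ℕ, (1 : ℝ) / ε = m)
    (G : Set (X → ℝ))
    (hG : G = {v | ∀ x : X, (∃ m : ℕ, v x = m * (ε / n)) ∧ v x ≤ 1})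
    (Δbar : Set (X → ℝ))
    (hΔ : Δbar = {u | ∃ v ∈ G, v ≠ 0 ∧ u = fun x => v x / (∑ y, |v y|)})
    (μ : X → ℝ) (hμ0 : ∀ x, 0 ≤ μ x) (hμ1 : ∑ x, μ x = 1) :
    ∃ μbar ∈ Δbar,
      (1 / 2) * ∑ x, |μ x - μbar x| ≤ ε ∧
      ∀ x, μ x / (1 + ε) ≤ μbar x := by
  obtain ⟨m, hm⟩ := hinv
  have hnR : (0:ℝ) < n := by positivity
  have hεn : (0:ℝ) < ε / n := by positivity
  have hmpos : (0:ℝ) < m := by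
    rw [← hm]; positivity
  -- the quantized vector
  set v : X → ℝ := fun x => (⌈(n / ε) * μ x⌉₊ : ℝ) * (ε / n) with hv
  have hv0 : ∀ x, 0 ≤ v x := fun x => by positivity
  have hμle : ∀ x, μ x ≤ 1 := by
    intro x
    rw [← hμ1]
    exact Finset.single_le_sum (fun y _ => hμ0 y) (Finset.mem_univ x)
  have hvle1 : ∀ x, v x ≤ 1 := by
    intro x
    have hceil : (⌈(n / ε) * μ x⌉₊ : ℝ) ≤ (n * m : ℕ) := by
      have : (n / ε) * μ x ≤ (n * m : ℕ) := by
        push_cast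
        calc (n / ε) * μ x ≤ (n / ε) * 1 := by
              apply mul_le_mul_of_nonneg_left (hμle x) (by positivity)
          _ = n * (1 / ε) := by ring
          _ = n * m := by rw [hm]
      exact_mod_cast Nat.ceil_le.mpr this
    calc v x ≤ (n * m : ℕ) * (ε / n) := by
          exact mul_le_mul_of_nonneg_right hceil (le_of_lt hεn)
      _ = (m * ε) := by push_cast; field_simp
      _ = 1 := by
          have : ε ≠ 0 := ne_of_gt hε
          field_simp at hm ⊢
          linarith [hm]
  have hlower : ∀ x, μ x ≤ v x := by
    intro x
    have := Nat.le_ceil ((n / ε) * μ x)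
    have h2 : (n / ε) * μ x * (ε / n) ≤ (⌈(n / ε) * μ x⌉₊ : ℝ) * (ε / n) :=
      mul_le_mul_of_nonneg_right this (le_of_lt hεn)
    have heq : (n / ε) * μ x * (ε / n) = μ x := by field_simp
    rw [heq] at h2; exact h2
  have hupper : ∀ x, v x ≤ μ x + ε / n := by
    intro x
    have h0 : 0 ≤ (n / ε) * μ x := mul_nonneg (by positivity) (hμ0 x)
    have := (Nat.ceil_lt_add_one h0).le
    have h2 : (⌈(n / ε) * μ x⌉₊ : ℝ) * (ε / n) ≤ ((n / ε) * μ x + 1) * (ε / n) :=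
      mul_le_mul_of_nonneg_right this (le_of_lt hεn)
    have heq : ((n / ε) * μ x + 1) * (ε / n) = μ x + ε / n := by field_simp
    rw [heq] at h2; exact h2
  set S : ℝ := ∑ x, v x with hS
  have hS1 : 1 ≤ S := by
    rw [hS, ← hμ1]
    exact Finset.sum_le_sum fun x _ => hlower x
  have hSpos : 0 < S := lt_of_lt_of_le one_pos hS1
  have hSle : S ≤ 1 + ε := by
    have : S ≤ ∑ x : X, (μ x + ε / n) := Finset.sum_le_sum fun x _ => hupper x
    rw [Finset.sum_add_distrib, hμ1, Finset.sum_const, Finset.card_univ, hcard] at this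
    calc S ≤ 1 + n • (ε / n) := this
      _ = 1 + ε := by
          rw [nsmul_eq_mul]
          field_simp
  have habs : (∑ y, |v y|) = S := by
    rw [hS]; exact Finset.sum_congr rfl fun y _ => abs_of_nonneg (hv0 y)
  refine ⟨fun x => v x / S, ?_, ?_, ?_⟩
  · rw [hΔ]
    refine ⟨v, ?_, ?_, ?_⟩
    · rw [hG]
      exact fun x => ⟨⟨⌈(n / ε) * μ x⌉₊, rfl⟩, hvle1 x⟩
    · intro h
      have : S = 0 := by
        rw [hS, show v = 0 from h]; simp
      linarith
    · funext x; rw [habs]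
  · -- TV bound
    have key : ∀ x, |μ x - v x / S| ≤ (v x - μ x) + (v x - v x / S) := by
      intro x
      have h1 : v x / S ≤ v x := by
        rw [div_le_iff₀ hSpos]
        nlinarith [hv0 x]
      have h2 : 0 ≤ v x / S := div_nonneg (hv0 x) hSpos.le
      rw [abs_le]
      constructor <;> nlinarith [hlower x]
    have hsum : ∑ x, |μ x - v x / S| ≤ ∑ x, ((v x - μ x) + (v x - v x / S)) :=
      Finset.sum_le_sum fun x _ => key x
    have hdiv : ∑ x, v x / S = 1 := by
      rw [← Finset.sum_div, ← hS, div_self hSpos.ne']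
    have : ∑ x, ((v x - μ x) + (v x - v x / S)) = 2 * S - 2 := by
      rw [Finset.sum_add_distrib, Finset.sum_sub_distrib, Finset.sum_sub_distrib,
        hμ1, hdiv, ← hS]
      ring
    rw [this] at hsum
    linarith
  · intro x
    exact div_le_div₀ (hv0 x) (hlower x) hSpos hSle
end
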